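/- With A, B, C and ψ as in the construction, let ρ_ABC be the reduced density matrix of |ψ⟩⟨ψ| on the first three factors (partial trace over the fourth factor), and let ρ_A, ρ_B, ρ_C be the one-body reduced density matrices. Then Matrix.rank ρ_ABC ≤ d + 1, and the polygonal inequality is saturated: λmax(ρ_A) + λmax(ρ_B) + λmax(ρ_C) = 2 + λmax(ρ_ABC). -/

import Mathlib

/-!
Reshape `ψ` into the `(d+1)³ × (d+1)` matrix `M` obtained by splitting off the fourth factor.
Then `ρ_ABC = M Mᴴ`, so its rank is at most `d + 1`, and its largest eigenvalue is that of
`Mᴴ M = diag(t, A + B + C)` with `t = 1 - tr (A + B + C)`; the hypothesis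
`λmax(A + B + C) ≤ t` makes this `t`. Likewise `ρ_A = diag(1 - tr A, A)`, and
`A ≤ A + B + C ≤ t ≤ 1 - tr A` gives `λmax(ρ_A) = 1 - tr A`; `ρ_B` and `ρ_C` follow by
permuting the roles of `A`, `B`, `C`. Summing, `(1 - tr A) + (1 - tr B) + (1 - tr C) = 2 + t`.
-/

open scoped BigOperators
open ComplexOrder

open Classical in
/-- The largest eigenvalue `λmax` of a Hermitian matrix; junk value `0` for
non-Hermitian matrices. -/
noncomputable def lmaxM {m : Type*} [Fintype m] [DecidableEq m] (H : Matrix m m ℂ) : ℝ :=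
  if h : H.IsHermitian then ⨆ i, h.eigenvalues i else 0

/-- The positive semidefinite square root, with the definition `Matrix.PosSemidef.sqrt`
had in the older Mathlib (it has since been removed in favour of `CFC.sqrt`). -/
noncomputable def psdSqrt {n : Type*} [Fintype n] [DecidableEq n] {A : Matrix n n ℂ}
    (hA : A.PosSemidef) : Matrix n n ℂ :=
  hA.1.eigenvectorUnitary.1 * Matrix.diagonal ((↑) ∘ Real.sqrt ∘ hA.1.eigenvalues) *
    (star hA.1.eigenvectorUnitary : Matrix n n ℂ)

/-- The four-partite pure state `ψ` built from positive semidefinite matrices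
`A`, `B`, `C`, identifying `Fin (d+1)` with `{0} ⊕ Fin d` via `Fin.succ`:
`ψ (i+1, 0, 0, l+1) = (√A) i l`, `ψ (0, j+1, 0, l+1) = (√B) j l`,
`ψ (0, 0, k+1, l+1) = (√C) k l`, `ψ (0,0,0,0) = √(1 - tr (A+B+C))`, and `0` otherwise. -/
noncomputable def purif {d : ℕ} {A B C : Matrix (Fin d) (Fin d) ℂ}
    (hA : A.PosSemidef) (hB : B.PosSemidef) (hC : C.PosSemidef)
    (u : Fin (d + 1) × Fin (d + 1) × Fin (d + 1) × Fin (d + 1)) : ℂ :=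
  if hi : u.1 = 0 then
    if hj : u.2.1 = 0 then
      if hk : u.2.2.1 = 0 then
        if _hl : u.2.2.2 = 0 then (Real.sqrt (1 - ((A + B + C).trace).re) : ℂ) else 0
      else
        if hl : u.2.2.2 = 0 then 0 else psdSqrt hC (u.2.2.1.pred hk) (u.2.2.2.pred hl)
    else
      if _hk : u.2.2.1 = 0 then
        if hl : u.2.2.2 = 0 then 0 else psdSqrt hB (u.2.1.pred hj) (u.2.2.2.pred hl)
      else 0
  else
    if _hj : u.2.1 = 0 then
      if _hk : u.2.2.1 = 0 then
        if hl : u.2.2.2 = 0 then 0 else psdSqrt hA (u.1.pred hi) (u.2.2.2.pred hl)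
      else 0
    else 0

/-- The reduced density matrix of the pure state `|ψ⟩⟨ψ|` of four particles on the
first three factors (partial trace over the fourth factor). -/
noncomputable def redABC {N : ℕ}
    (ψ : Fin N × Fin N × Fin N × Fin N → ℂ) :
    Matrix (Fin N × Fin N × Fin N) (Fin N × Fin N × Fin N) ℂ :=
  Matrix.of fun u v =>
    ∑ l, ψ (u.1, u.2.1, u.2.2, l) * (starRingEnd ℂ) (ψ (v.1, v.2.1, v.2.2, l))

/-- One-body reduced density matrix of a tripartite state on the first factor. -/
noncomputable def redA {a b c : ℕ}
    (ρ : Matrix (Fin a × Fin b × Fin c) (Fin a × Fin b × Fin c) ℂ) :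
    Matrix (Fin a) (Fin a) ℂ :=
  Matrix.of fun i i' => ∑ j, ∑ k, ρ (i, j, k) (i', j, k)

/-- One-body reduced density matrix of a tripartite state on the second factor. -/
noncomputable def redB {a b c : ℕ}
    (ρ : Matrix (Fin a × Fin b × Fin c) (Fin a × Fin b × Fin c) ℂ) :
    Matrix (Fin b) (Fin b) ℂ :=
  Matrix.of fun j j' => ∑ i, ∑ k, ρ (i, j, k) (i, j', k)

/-- One-body reduced density matrix of a tripartite state on the third factor. -/
noncomputable def redC {a b c : ℕ}
    (ρ : Matrix (Fin a × Fin b × Fin c) (Fin a × Fin b × Fin c) ℂ) :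
    Matrix (Fin c) (Fin c) ℂ :=
  Matrix.of fun k k' => ∑ i, ∑ j, ρ (i, j, k) (i, j, k')


open Matrix
open scoped MatrixOrder

section LargestEigenvalue

variable {n : Type*} [Fintype n] [DecidableEq n] {H : Matrix n n ℂ}

lemma lmaxM_eq_iSup (hH : H.IsHermitian) : lmaxM H = ⨆ i, hH.eigenvalues i := by
  simp [lmaxM, hH]

lemma eigenvalues_le_lmaxM (hH : H.IsHermitian) (i : n) : hH.eigenvalues i ≤ lmaxM H := by
  rw [lmaxM_eq_iSup hH]
  exact le_ciSup (Set.finite_range _).bddAbove i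

lemma lmaxM_nonneg (hH : H.PosSemidef) : 0 ≤ lmaxM H := by
  rw [lmaxM_eq_iSup hH.1]
  exact Real.iSup_nonneg hH.eigenvalues_nonneg

lemma le_algebraMap_of_lmaxM_le (hH : H.IsHermitian) {t : ℝ} (h : lmaxM H ≤ t) :
    H ≤ algebraMap ℝ _ t := by
  rw [le_algebraMap_iff_spectrum_le hH.isSelfAdjoint, hH.spectrum_real_eq_range_eigenvalues,
    Set.forall_mem_range]
  exact fun i => (eigenvalues_le_lmaxM hH i).trans h

lemma lmaxM_le_of_le_algebraMap [Nonempty n] (hH : H.IsHermitian) {t : ℝ}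
    (h : H ≤ algebraMap ℝ _ t) : lmaxM H ≤ t := by
  rw [le_algebraMap_iff_spectrum_le hH.isSelfAdjoint, hH.spectrum_real_eq_range_eigenvalues,
    Set.forall_mem_range] at h
  rw [lmaxM_eq_iSup hH]
  exact ciSup_le h

lemma mem_spectrum_of_mulVec_eq {x : n → ℂ} (hx : x ≠ 0) {s : ℝ} (h : H *ᵥ x = (s : ℂ) • x) :
    s ∈ spectrum ℝ H := by
  rw [← spectrum.algebraMap_mem_iff ℂ, ← spectrum_toLin']
  exact Module.End.HasEigenvalue.mem_spectrum
    (Module.End.hasEigenvalue_of_hasEigenvector ⟨Module.End.mem_eigenspace_iff.mpr h, hx⟩)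

lemma le_lmaxM_of_mulVec_eq (hH : H.IsHermitian) {x : n → ℂ} (hx : x ≠ 0) {s : ℝ}
    (h : H *ᵥ x = (s : ℂ) • x) : s ≤ lmaxM H := by
  obtain ⟨i, rfl⟩ := hH.spectrum_real_eq_range_eigenvalues ▸ mem_spectrum_of_mulVec_eq hx h
  exact eigenvalues_le_lmaxM hH i

lemma lmaxM_mul_conjTranspose_le {m : Type*} [Fintype m] [DecidableEq m] (M : Matrix m n ℂ) :
    lmaxM (M * Mᴴ) ≤ lmaxM (Mᴴ * M) := by
  have hH := isHermitian_mul_conjTranspose_self M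
  have hnonneg := lmaxM_nonneg (posSemidef_conjTranspose_mul_self M)
  rw [lmaxM_eq_iSup hH]
  refine Real.iSup_le (fun i => ?_) hnonneg
  rcases le_or_gt (hH.eigenvalues i) 0 with hle | hpos
  · exact hle.trans hnonneg
  set v := ⇑(hH.eigenvectorBasis i)
  have hv : (M * Mᴴ) *ᵥ v = (hH.eigenvalues i : ℂ) • v := by
    rw [hH.mulVec_eigenvectorBasis i, RCLike.real_smul_eq_coe_smul (K := ℂ)]
    rfl
  -- `Mᴴ v` is an eigenvector of `Mᴴ M` for the same eigenvalue, nonzero since `M (Mᴴ v) ≠ 0`.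
  refine le_lmaxM_of_mulVec_eq (isHermitian_conjTranspose_mul_self M) (x := Mᴴ *ᵥ v) ?_ ?_
  · intro h0
    have : (hH.eigenvalues i : ℂ) • v = 0 := by rw [← hv, ← mulVec_mulVec, h0, mulVec_zero]
    refine hH.eigenvectorBasis.orthonormal.ne_zero i (WithLp.ofLp_injective 2 ?_)
    rw [WithLp.ofLp_zero]
    exact (smul_eq_zero.mp this).resolve_left (by exact_mod_cast hpos.ne')
  · rw [mulVec_mulVec, Matrix.mul_assoc, ← mulVec_mulVec, hv, mulVec_smul]

lemma lmaxM_mul_conjTranspose_eq {m : Type*} [Fintype m] [DecidableEq m] (M : Matrix m n ℂ) :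
    lmaxM (M * Mᴴ) = lmaxM (Mᴴ * M) :=
  (lmaxM_mul_conjTranspose_le M).antisymm (by simpa using lmaxM_mul_conjTranspose_le Mᴴ)

end LargestEigenvalue

section PsdSqrt

variable {n : Type*} [Fintype n] [DecidableEq n] {X : Matrix n n ℂ} (hX : X.PosSemidef)
include hX

lemma psdSqrt_eq_cfcSqrt : psdSqrt hX = CFC.sqrt X := by
  rw [CFC.sqrt_eq_real_sqrt X hX.nonneg, cfcₙ_eq_cfc, hX.1.cfc_eq, IsHermitian.cfc,
    Unitary.conjStarAlgAut_apply]
  rfl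

lemma conjTranspose_psdSqrt : (psdSqrt hX)ᴴ = psdSqrt hX := by
  rw [psdSqrt_eq_cfcSqrt hX]
  exact (CFC.sqrt_nonneg X).isSelfAdjoint

lemma psdSqrt_mul_conjTranspose : psdSqrt hX * (psdSqrt hX)ᴴ = X := by
  rw [conjTranspose_psdSqrt hX, psdSqrt_eq_cfcSqrt hX, CFC.sqrt_mul_sqrt_self X hX.nonneg]

lemma conjTranspose_psdSqrt_mul : (psdSqrt hX)ᴴ * psdSqrt hX = X := by
  rw [conjTranspose_psdSqrt hX, psdSqrt_eq_cfcSqrt hX, CFC.sqrt_mul_sqrt_self X hX.nonneg]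

lemma sum_psdSqrt_mul_conj (i j : n) :
    ∑ l, psdSqrt hX i l * (starRingEnd ℂ) (psdSqrt hX j l) = X i j := by
  simpa [mul_apply] using congr_fun₂ (psdSqrt_mul_conjTranspose hX) i j

lemma sum_conj_psdSqrt_mul (i j : n) :
    ∑ l, (starRingEnd ℂ) (psdSqrt hX l i) * psdSqrt hX l j = X i j := by
  simpa [mul_apply] using congr_fun₂ (conjTranspose_psdSqrt_mul hX) i j

lemma sum_sum_psdSqrt_mul_conj :
    ∑ k, ∑ l, psdSqrt hX k l * (starRingEnd ℂ) (psdSqrt hX k l) = X.trace := by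
  simp only [sum_psdSqrt_mul_conj hX, trace, diag]

end PsdSqrt

lemma ofReal_re_trace {n : Type*} [Fintype n] {X : Matrix n n ℂ} (hX : X.PosSemidef) :
    ((X.trace.re : ℝ) : ℂ) = X.trace :=
  Complex.ext rfl (Complex.nonneg_iff.mp hX.trace_nonneg).2

noncomputable def cornerBlockDiag {d : ℕ} (c : ℝ) (A : Matrix (Fin d) (Fin d) ℂ) :
    Matrix (Fin (d + 1)) (Fin (d + 1)) ℂ :=
  of (Fin.cases (Fin.cases (c : ℂ) 0) fun i => Fin.cases 0 (A i))

section CornerBlockDiag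

variable {d : ℕ} {c : ℝ} {A : Matrix (Fin d) (Fin d) ℂ}

@[simp] lemma cornerBlockDiag_zero_zero : cornerBlockDiag c A 0 0 = c := rfl
@[simp] lemma cornerBlockDiag_zero_succ (i : Fin d) : cornerBlockDiag c A 0 i.succ = 0 := rfl
@[simp] lemma cornerBlockDiag_succ_zero (i : Fin d) : cornerBlockDiag c A i.succ 0 = 0 := rfl
@[simp] lemma cornerBlockDiag_succ_succ (i j : Fin d) :
    cornerBlockDiag c A i.succ j.succ = A i j := rfl

lemma cornerBlockDiag_isHermitian (hA : A.IsHermitian) : (cornerBlockDiag c A).IsHermitian := by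
  ext i j
  cases i using Fin.cases <;> cases j using Fin.cases <;> simp [hA.apply]

lemma dotProduct_cornerBlockDiag_mulVec (x : Fin (d + 1) → ℂ) :
    star x ⬝ᵥ cornerBlockDiag c A *ᵥ x
      = c * (star (x 0) * x 0) + star (Fin.tail x) ⬝ᵥ A *ᵥ Fin.tail x := by
  simp [dotProduct, mulVec, Fin.sum_univ_succ, Fin.tail, Finset.mul_sum]
  ring

lemma cornerBlockDiag_posSemidef (hc : 0 ≤ c) (hA : A.PosSemidef) :
    (cornerBlockDiag c A).PosSemidef := by
  refine .of_dotProduct_mulVec_nonneg (cornerBlockDiag_isHermitian hA.1) fun x => ?_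
  rw [dotProduct_cornerBlockDiag_mulVec]
  exact add_nonneg (mul_nonneg (by exact_mod_cast hc) (star_mul_self_nonneg _))
    (hA.dotProduct_mulVec_nonneg _)

lemma algebraMap_sub_cornerBlockDiag :
    algebraMap ℝ _ c - cornerBlockDiag c A = cornerBlockDiag 0 (algebraMap ℝ _ c - A) := by
  ext i j
  cases i using Fin.cases <;> cases j using Fin.cases <;>
    simp [algebraMap_eq_diagonal, diagonal_apply, Fin.succ_ne_zero, (Fin.succ_ne_zero _).symm]

lemma cornerBlockDiag_le_algebraMap (h : A ≤ algebraMap ℝ _ c) :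
    cornerBlockDiag c A ≤ algebraMap ℝ _ c := by
  rw [le_iff, algebraMap_sub_cornerBlockDiag]
  exact cornerBlockDiag_posSemidef le_rfl h

lemma cornerBlockDiag_mulVec_single :
    cornerBlockDiag c A *ᵥ Pi.single 0 1 = (c : ℂ) • Pi.single 0 1 := by
  ext i
  cases i using Fin.cases <;> simp [mulVec_single]

lemma lmaxM_cornerBlockDiag (hA : A.IsHermitian) (h : A ≤ algebraMap ℝ _ c) :
    lmaxM (cornerBlockDiag c A) = c :=
  (lmaxM_le_of_le_algebraMap (cornerBlockDiag_isHermitian hA)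
    (cornerBlockDiag_le_algebraMap h)).antisymm
    (le_lmaxM_of_mulVec_eq (cornerBlockDiag_isHermitian hA) (by simp) cornerBlockDiag_mulVec_single)

end CornerBlockDiag

noncomputable def lastFactorMatrix {N : ℕ} (ψ : Fin N × Fin N × Fin N × Fin N → ℂ) :
    Matrix (Fin N × Fin N × Fin N) (Fin N) ℂ :=
  of fun u l => ψ (u.1, u.2.1, u.2.2, l)

section PartialTrace

variable {N : ℕ} (ψ : Fin N × Fin N × Fin N × Fin N → ℂ)

lemma redABC_eq_mul_conjTranspose :
    redABC ψ = lastFactorMatrix ψ * (lastFactorMatrix ψ)ᴴ := by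
  ext u v
  simp [redABC, lastFactorMatrix, mul_apply]

lemma rank_redABC_le : (redABC ψ).rank ≤ N := by
  rw [redABC_eq_mul_conjTranspose]
  exact (rank_mul_le_left _ _).trans ((rank_le_card_width _).trans_eq (Fintype.card_fin N))

lemma lmaxM_redABC : lmaxM (redABC ψ) = lmaxM ((lastFactorMatrix ψ)ᴴ * lastFactorMatrix ψ) := by
  rw [redABC_eq_mul_conjTranspose, lmaxM_mul_conjTranspose_eq]

end PartialTrace

section Purification

variable {d : ℕ} {A B C : Matrix (Fin d) (Fin d) ℂ}
  (hA : A.PosSemidef) (hB : B.PosSemidef) (hC : C.PosSemidef)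

lemma purif_swap₁₂ (i j k l : Fin (d + 1)) :
    purif hA hB hC (i, j, k, l) = purif hB hA hC (j, i, k, l) := by
  unfold purif
  split_ifs <;> simp_all [add_comm A B]

lemma purif_swap₁₃ (i j k l : Fin (d + 1)) :
    purif hA hB hC (i, j, k, l) = purif hC hB hA (k, j, i, l) := by
  unfold purif
  split_ifs <;> simp_all [add_comm, add_left_comm]

lemma redB_redABC_purif : redB (redABC (purif hA hB hC)) = redA (redABC (purif hB hA hC)) := by
  ext j j'
  simp only [redA, redB, redABC, of_apply, purif_swap₁₂ hA hB hC]

lemma redC_redABC_purif : redC (redABC (purif hA hB hC)) = redA (redABC (purif hC hB hA)) := by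
  ext k k'
  simp only [redA, redC, redABC, of_apply, purif_swap₁₃ hA hB hC]
  exact Finset.sum_comm

variable (ht : 0 ≤ 1 - (A + B + C).trace.re)
include ht

lemma conjTranspose_mul_lastFactorMatrix_purif :
    (lastFactorMatrix (purif hA hB hC))ᴴ * lastFactorMatrix (purif hA hB hC)
      = cornerBlockDiag (1 - (A + B + C).trace.re) (A + B + C) := by
  ext l l'
  cases l using Fin.cases <;> cases l' using Fin.cases <;>
    simp [lastFactorMatrix, mul_apply, Fintype.sum_prod_type, Fin.sum_univ_succ, purif,
      Fin.succ_ne_zero, sum_conj_psdSqrt_mul]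
  case zero.zero =>
    rw [← Complex.ofReal_mul, Real.mul_self_sqrt (by simpa [trace_add] using ht)]
    push_cast
    ring
  case succ.succ => ring

lemma redA_redABC_purif :
    redA (redABC (purif hA hB hC)) = cornerBlockDiag (1 - A.trace.re) A := by
  ext i i'
  cases i using Fin.cases <;> cases i' using Fin.cases
  case zero.zero =>
    simp [redA, redABC, Fin.sum_univ_succ, purif, Fin.succ_ne_zero, sum_sum_psdSqrt_mul_conj]
    rw [← Complex.ofReal_mul, Real.mul_self_sqrt (by simpa [trace_add] using ht),
      ← ofReal_re_trace hB, ← ofReal_re_trace hC]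
    push_cast [Complex.ofReal_re]
    ring
  all_goals simp [redA, redABC, Fin.sum_univ_succ, purif, Fin.succ_ne_zero, sum_psdSqrt_mul_conj]

variable (hS : A + B + C ≤ algebraMap ℝ _ (1 - (A + B + C).trace.re))
include hS

lemma lmaxM_redABC_purif : lmaxM (redABC (purif hA hB hC)) = 1 - (A + B + C).trace.re := by
  rw [lmaxM_redABC, conjTranspose_mul_lastFactorMatrix_purif hA hB hC ht]
  exact lmaxM_cornerBlockDiag ((hA.add hB).add hC).1 hS

lemma lmaxM_redA_redABC_purif : lmaxM (redA (redABC (purif hA hB hC))) = 1 - A.trace.re := by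
  rw [redA_redABC_purif hA hB hC ht]
  refine lmaxM_cornerBlockDiag hA.1 ?_
  calc A ≤ A + B + C := by
        rw [add_assoc]
        exact le_add_of_nonneg_right (hB.add hC).nonneg
    _ ≤ algebraMap ℝ _ (1 - (A + B + C).trace.re) := hS
    _ ≤ algebraMap ℝ _ (1 - A.trace.re) := by
        gcongr
        rw [add_assoc, trace_add]
        exact le_add_of_nonneg_right (hB.add hC).trace_nonneg

lemma lmaxM_redB_redABC_purif : lmaxM (redB (redABC (purif hA hB hC))) = 1 - B.trace.re := by
  rw [redB_redABC_purif, lmaxM_redA_redABC_purif hB hA hC] <;> rwa [add_comm B A]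

lemma lmaxM_redC_redABC_purif : lmaxM (redC (redABC (purif hA hB hC))) = 1 - C.trace.re := by
  have hperm : C + B + A = A + B + C := by abel
  rw [redC_redABC_purif, lmaxM_redA_redABC_purif hC hB hA] <;> rwa [hperm]

end Purification

theorem stmt18_general (d : ℕ)
    (A B C : Matrix (Fin d) (Fin d) ℂ)
    (hA : A.PosSemidef) (hB : B.PosSemidef) (hC : C.PosSemidef)
    (hbound : lmaxM (A + B + C) ≤ 1 - ((A + B + C).trace).re) :
    (redABC (purif hA hB hC)).rank ≤ d + 1 ∧
    lmaxM (redA (redABC (purif hA hB hC))) + lmaxM (redB (redABC (purif hA hB hC)))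
        + lmaxM (redC (redABC (purif hA hB hC)))
      = 2 + lmaxM (redABC (purif hA hB hC)) := by
  have hABC : (A + B + C).PosSemidef := (hA.add hB).add hC
  have ht : 0 ≤ 1 - (A + B + C).trace.re := (lmaxM_nonneg hABC).trans hbound
  have hS := le_algebraMap_of_lmaxM_le hABC.1 hbound
  refine ⟨rank_redABC_le _, ?_⟩
  rw [lmaxM_redA_redABC_purif hA hB hC ht hS, lmaxM_redB_redABC_purif hA hB hC ht hS,
    lmaxM_redC_redABC_purif hA hB hC ht hS, lmaxM_redABC_purif hA hB hC ht hS]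
  simp only [trace_add, Complex.add_re]
  ring

theorem stmt18 (d : ℕ) (hd : 1 ≤ d)
    (A B C : Matrix (Fin d) (Fin d) ℂ)
    (hA : A.PosSemidef) (hB : B.PosSemidef) (hC : C.PosSemidef)
    (hbound : lmaxM (A + B + C) ≤ 1 - ((A + B + C).trace).re) :
    (redABC (purif hA hB hC)).rank ≤ d + 1 ∧
    lmaxM (redA (redABC (purif hA hB hC))) + lmaxM (redB (redABC (purif hA hB hC)))
        + lmaxM (redC (redABC (purif hA hB hC)))
      = 2 + lmaxM (redABC (purif hA hB hC)) :=
  stmt18_general d A B C hA hB hC hbound
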